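/- arXiv:1611.09742 — 7 statements merged into one kernel-verified Lean document; each statement's English description precedes it below -/
import Mathlib

section
/- Let A be a real m×n matrix, y ∈ ℝ^m, δ ≥ 0, and x ∈ ℝ^n with x ≠ 0 and Ax ≠ y. Define the rank-one matrix ΔA = δ·(Ax − y)xᵀ / (‖y − Ax‖₂·‖x‖₂). Then ‖ΔA‖₂ = δ and ‖y − (A + ΔA)x‖₂ = ‖y − Ax‖₂ + δ‖x‖₂; in particular ΔA attains the upper bound ‖y − Ax‖₂ + δ‖x‖₂ on the worst-case residual. -/
open Matrix

/-- The spectral norm of a real `m × n` matrix: the operator norm of the induced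
linear map between Euclidean spaces. -/
noncomputable def matSpectralNorm {m n : ℕ} (A : Matrix (Fin m) (Fin n) ℝ) : ℝ :=
  ‖LinearMap.toContinuousLinearMap (Matrix.toEuclideanLin A)‖

/-!
With `u = Ax − y`, the matrix `ΔA` is the outer product `vecMulVec (c • u) x`, i.e. the rank-one
operator `z ↦ ⟪x, z⟫ • c • u` with `c = δ / (‖u‖ ‖x‖)`. Its operator norm is `c ‖u‖ ‖x‖ = δ`, and it
moves `Ax` further along the residual direction `u`: `(A + ΔA)x − y = (1 + δ‖x‖/‖u‖) • u`, so the
residual grows by exactly `δ‖x‖`.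
-/

open InnerProductSpace

lemma matSpectralNorm_toEuclideanLin_symm {m n : ℕ}
    (T : EuclideanSpace ℝ (Fin n) →L[ℝ] EuclideanSpace ℝ (Fin m)) :
    matSpectralNorm (toEuclideanLin.symm T.toLinearMap) = ‖T‖ := by
  rw [matSpectralNorm, LinearEquiv.apply_symm_apply]
  rfl

lemma norm_add_smul_self {F : Type*} [SeminormedAddCommGroup F] [NormedSpace ℝ F] (u : F)
    {t : ℝ} (ht : 0 ≤ t) : ‖u + t • u‖ = ‖u‖ + t * ‖u‖ := by
  calc ‖u + t • u‖ = ‖(1 + t) • u‖ := by rw [add_smul, one_smul]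
    _ = ‖u‖ + t * ‖u‖ := by rw [norm_smul, Real.norm_of_nonneg (by positivity), add_mul, one_mul]

section RankOne

variable {E F : Type*} [NormedAddCommGroup E] [InnerProductSpace ℝ E]
  [NormedAddCommGroup F] [NormedSpace ℝ F]

lemma norm_rankOne_div_norm_mul_norm {u : F} {x : E} (hu : u ≠ 0) (hx : x ≠ 0) {δ : ℝ}
    (hδ : 0 ≤ δ) : ‖rankOne ℝ ((δ / (‖u‖ * ‖x‖)) • u) x‖ = δ := by
  have : 0 < ‖u‖ * ‖x‖ := by positivity
  rw [norm_rankOne, norm_smul, Real.norm_of_nonneg (by positivity), mul_assoc,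
    div_mul_cancel₀ _ this.ne']

lemma rankOne_div_norm_mul_norm_apply_self (u : F) {x : E} (hx : x ≠ 0) (δ : ℝ) :
    rankOne ℝ ((δ / (‖u‖ * ‖x‖)) • u) x x = (δ * ‖x‖ / ‖u‖) • u := by
  have : ‖x‖ ≠ 0 := norm_ne_zero_iff.mpr hx
  rw [rankOne_apply, real_inner_self_eq_norm_sq, smul_smul]
  congr 1
  field_simp

end RankOne

/-- The rank-one perturbation `ΔA = δ (Ax − y) xᵀ / (‖y − Ax‖₂ ‖x‖₂)` has spectral norm `δ`
and attains the worst-case residual bound: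
`‖y − (A + ΔA)x‖₂ = ‖y − Ax‖₂ + δ‖x‖₂`. -/
theorem stmt_1 (m n : ℕ) (A : Matrix (Fin m) (Fin n) ℝ)
    (y : EuclideanSpace ℝ (Fin m)) (δ : ℝ) (hδ : 0 ≤ δ)
    (x : EuclideanSpace ℝ (Fin n)) (hx : x ≠ 0) (hAx : Matrix.toEuclideanLin A x ≠ y)
    (ΔA : Matrix (Fin m) (Fin n) ℝ)
    (hΔA : ΔA = Matrix.of fun i j =>
      δ * ((Matrix.toEuclideanLin A x - y) i * x j) /
        (‖y - Matrix.toEuclideanLin A x‖ * ‖x‖)) :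
    matSpectralNorm ΔA = δ ∧
      ‖y - Matrix.toEuclideanLin (A + ΔA) x‖ = ‖y - Matrix.toEuclideanLin A x‖ + δ * ‖x‖ := by
  set u := toEuclideanLin A x - y
  have hu : u ≠ 0 := sub_ne_zero.mpr hAx
  have hΔA_rankOne :
      ΔA = toEuclideanLin.symm (rankOne ℝ ((δ / (‖u‖ * ‖x‖)) • u) x).toLinearMap := by
    rw [symm_toEuclideanLin_rankOne, hΔA, norm_sub_rev]
    ext i j
    simp only [of_apply, WithLp.ofLp_smul, star_trivial, vecMulVec_apply, Pi.smul_apply,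
      smul_eq_mul]
    ring
  refine ⟨by rw [hΔA_rankOne, matSpectralNorm_toEuclideanLin_symm,
    norm_rankOne_div_norm_mul_norm hu hx hδ], ?_⟩
  have hresidual : y - toEuclideanLin (A + ΔA) x = -(u + (δ * ‖x‖ / ‖u‖) • u) := by
    rw [hΔA_rankOne, map_add, LinearEquiv.apply_symm_apply, LinearMap.add_apply,
      ContinuousLinearMap.coe_coe, rankOne_div_norm_mul_norm_apply_self u hx]
    simp only [u]
    module
  rw [hresidual, norm_neg, norm_add_smul_self u (by positivity), norm_sub_rev y,
    div_mul_cancel₀ _ (norm_ne_zero_iff.mpr hu)]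
end

section
/- (Theorem 1) Let A be a real m×n matrix, y ∈ ℝ^m, δ > 0, and let W(x) = ‖y − Ax‖₂ + δ‖x‖₂. Suppose x̂ ∈ ℝ^n is a global minimizer of W with x̂ ≠ 0 and Ax̂ ≠ y. Set ρ = δ·‖y − Ax̂‖₂/‖x̂‖₂. Then ρ > 0, the matrix AᵀA + ρIₙ is invertible, and x̂ = (AᵀA + ρIₙ)⁻¹Aᵀy. -/
/-!
At a minimizer `x̂` with `x̂ ≠ 0` and residual `r = y - A x̂ ≠ 0`, both norms in
`W(x) = ‖y - A x‖ + δ‖x‖` are differentiable, so the gradient `-Aᵀ r / ‖r‖ + δ x̂ / ‖x̂‖` vanishes,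
i.e. `Aᵀ (y - A x̂) = ρ x̂`. This is the regularized normal equation `(AᵀA + ρ I) x̂ = Aᵀ y`, and
`AᵀA + ρ I` is positive definite, hence invertible, since `ρ > 0`.
-/

open Matrix

section FirstOrderCondition

variable {E F : Type*} [NormedAddCommGroup E] [InnerProductSpace ℝ E]
  [NormedAddCommGroup F] [InnerProductSpace ℝ F]

lemma hasDerivAt_norm_add_smul {c : E} (hc : c ≠ 0) (w : E) :
    HasDerivAt (fun t : ℝ => ‖c + t • w‖) (inner ℝ c w / ‖c‖) 0 := by
  have hline : HasDerivAt (fun t : ℝ => c + t • w) w 0 := by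
    simpa using ((hasDerivAt_id (0 : ℝ)).smul_const w).const_add c
  have hsqrt := hline.norm_sq.sqrt (by simpa using hc)
  simp only [zero_smul, add_zero, Real.sqrt_sq (norm_nonneg _)] at hsqrt
  convert hsqrt using 1
  field_simp

theorem inner_residual_eq_of_forall_le (L : E →ₗ[ℝ] F) (y : F) {δ : ℝ} {x : E}
    (hx : x ≠ 0) (hLx : L x ≠ y)
    (hmin : ∀ x', ‖y - L x‖ + δ * ‖x‖ ≤ ‖y - L x'‖ + δ * ‖x'‖) (v : E) :
    inner ℝ (y - L x) (L v) = δ * ‖y - L x‖ / ‖x‖ * inner ℝ x v := by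
  have hr : y - L x ≠ 0 := sub_ne_zero.mpr hLx.symm
  have hderiv := (hasDerivAt_norm_add_smul hr (-L v)).add
    ((hasDerivAt_norm_add_smul hx v).const_mul δ)
  have hlocmin : IsLocalMin (fun t : ℝ => ‖y - L x + t • -L v‖ + δ * ‖x + t • v‖) 0 :=
    Filter.Eventually.of_forall fun t => by
      simpa [sub_sub, ← sub_eq_add_neg] using hmin (x + t • v)
  have hzero := hlocmin.hasDerivAt_eq_zero hderiv
  rw [inner_neg_right] at hzero
  field_simp at hzero ⊢
  linarith

theorem adjoint_residual_eq_smul [FiniteDimensional ℝ E] [FiniteDimensional ℝ F]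
    (L : E →ₗ[ℝ] F) (y : F) {δ : ℝ} {x : E} (hx : x ≠ 0) (hLx : L x ≠ y)
    (hmin : ∀ x', ‖y - L x‖ + δ * ‖x‖ ≤ ‖y - L x'‖ + δ * ‖x'‖) :
    L.adjoint (y - L x) = (δ * ‖y - L x‖ / ‖x‖) • x :=
  ext_inner_right ℝ fun v => by
    rw [LinearMap.adjoint_inner_left, inner_residual_eq_of_forall_le L y hx hLx hmin v,
      real_inner_smul_left]

end FirstOrderCondition

section Matrix

variable {m n : Type*} [Fintype m] [Fintype n] [DecidableEq n]

lemma toEuclideanLin_transpose_eq_adjoint [DecidableEq m] (A : Matrix m n ℝ) :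
    toEuclideanLin Aᵀ = (toEuclideanLin A).adjoint := by
  rw [← conjTranspose_eq_transpose_of_trivial, toEuclideanLin_conjTranspose_eq_adjoint]

lemma posDef_transpose_mul_self_add_smul_one (A : Matrix m n ℝ) {ρ : ℝ} (hρ : 0 < ρ) :
    (Aᵀ * A + ρ • (1 : Matrix n n ℝ)).PosDef := by
  rw [← conjTranspose_eq_transpose_of_trivial]
  exact PosDef.posSemidef_add (posSemidef_conjTranspose_mul_self A) (PosDef.one.smul hρ)

lemma eq_toEuclideanLin_inv_mul_of_toEuclideanLin_eq {𝕜 : Type*} [RCLike 𝕜] [DecidableEq m]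
    {M : Matrix n n 𝕜} (hM : IsUnit M) (B : Matrix n m 𝕜) {x : EuclideanSpace 𝕜 n}
    {y : EuclideanSpace 𝕜 m}
    (h : toEuclideanLin M x = toEuclideanLin B y) :
    x = toEuclideanLin (M⁻¹ * B) y := by
  rw [toLpLin_mul_same, LinearMap.comp_apply, ← h, ← LinearMap.comp_apply, ← toLpLin_mul_same,
    nonsing_inv_mul M ((isUnit_iff_isUnit_det M).mp hM), toLpLin_one, LinearMap.id_apply]

end Matrix

/-- (Theorem 1) If `x̂ ≠ 0` with `Ax̂ ≠ y` is a global minimizer of the worst-case residual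
cost `W(x) = ‖y − Ax‖₂ + δ‖x‖₂` (with `δ > 0`), then for `ρ = δ‖y − Ax̂‖₂/‖x̂‖₂` we have
`ρ > 0`, `AᵀA + ρIₙ` is invertible, and `x̂ = (AᵀA + ρIₙ)⁻¹Aᵀy`. -/
theorem stmt_4 (m n : ℕ) (A : Matrix (Fin m) (Fin n) ℝ)
    (y : EuclideanSpace ℝ (Fin m)) (δ : ℝ) (hδ : 0 < δ)
    (xh : EuclideanSpace ℝ (Fin n)) (hxh : xh ≠ 0)
    (hAxh : Matrix.toEuclideanLin A xh ≠ y)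
    (hmin : ∀ x : EuclideanSpace ℝ (Fin n),
      ‖y - Matrix.toEuclideanLin A xh‖ + δ * ‖xh‖ ≤
        ‖y - Matrix.toEuclideanLin A x‖ + δ * ‖x‖) :
    ∀ ρ : ℝ, ρ = δ * ‖y - Matrix.toEuclideanLin A xh‖ / ‖xh‖ →
      0 < ρ ∧
      IsUnit (Aᵀ * A + ρ • (1 : Matrix (Fin n) (Fin n) ℝ)) ∧
      xh = Matrix.toEuclideanLin
        ((Aᵀ * A + ρ • (1 : Matrix (Fin n) (Fin n) ℝ))⁻¹ * Aᵀ) y := by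
  rintro ρ rfl
  have hρ : 0 < δ * ‖y - toEuclideanLin A xh‖ / ‖xh‖ := by
    have hr : y - toEuclideanLin A xh ≠ 0 := sub_ne_zero.mpr hAxh.symm
    positivity
  have hunit := (posDef_transpose_mul_self_add_smul_one A hρ).isUnit
  refine ⟨hρ, hunit, eq_toEuclideanLin_inv_mul_of_toEuclideanLin_eq hunit _ ?_⟩
  have hnormal := adjoint_residual_eq_smul (toEuclideanLin A) y hxh hAxh hmin
  rw [← toEuclideanLin_transpose_eq_adjoint, map_sub] at hnormal
  rw [map_add, LinearMap.add_apply, toLpLin_mul_same, LinearMap.comp_apply, map_smul,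
    toLpLin_one, LinearMap.smul_apply, LinearMap.id_apply, ← hnormal, add_sub_cancel]
end

section
/- (Theorem 2, exact white-signal case) Let n ≥ 1, let σ₁, …, σₙ be nonnegative reals with at least one σᵢ > 0, and let σ_z > 0 and σ_x > 0. Define MSE(ρ) = Σᵢ₌₁ⁿ (σ_z²σᵢ² + σ_x²ρ²)/(σᵢ² + ρ)² for ρ > 0. Then ρ⋆ = σ_z²/σ_x² is the unique global minimizer of MSE on (0, ∞): MSE(ρ⋆) < MSE(ρ) for every ρ > 0 with ρ ≠ ρ⋆. -/
/-!
With `r = σ_z²/σ_x²` each summand of `MSE` is `σ_x² (r s + ρ²)/(s + ρ)²` with `s = σᵢ²`, and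
its excess over the value at `ρ = r` is `σ_x² s (ρ - r)² / ((s + ρ)² (s + r))`. So every summand
is minimised at `ρ = r`, strictly so as soon as `σᵢ > 0`.
-/

/-- The summand of `MSE(ρ)` for `a = σ_z²`, `b = σ_x²` and `s = σᵢ²`. -/
noncomputable def mseTerm (a b s ρ : ℝ) : ℝ := (a * s + b * ρ ^ 2) / (s + ρ) ^ 2

theorem mseTerm_sub_mseTerm_div (a b s ρ : ℝ) (hb : b ≠ 0) (hsρ : s + ρ ≠ 0)
    (hsr : s + a / b ≠ 0) :
    mseTerm a b s ρ - mseTerm a b s (a / b)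
      = b * s * (ρ - a / b) ^ 2 / ((s + ρ) ^ 2 * (s + a / b)) := by
  obtain ⟨r, rfl⟩ : ∃ r, a = b * r := ⟨a / b, by field_simp⟩
  rw [mul_div_cancel_left₀ r hb] at hsr ⊢
  unfold mseTerm
  field_simp
  ring

theorem mseTerm_div_le {a b s ρ : ℝ} (ha : 0 < a) (hb : 0 < b) (hs : 0 ≤ s) (hρ : 0 < ρ) :
    mseTerm a b s (a / b) ≤ mseTerm a b s ρ := by
  have hgap := mseTerm_sub_mseTerm_div a b s ρ hb.ne' (by positivity) (by positivity)
  have : 0 ≤ b * s * (ρ - a / b) ^ 2 / ((s + ρ) ^ 2 * (s + a / b)) := by positivity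
  linarith

theorem mseTerm_div_lt {a b s ρ : ℝ} (ha : 0 ≤ a) (hb : 0 < b) (hs : 0 < s) (hρ : 0 ≤ ρ)
    (hne : ρ ≠ a / b) :
    mseTerm a b s (a / b) < mseTerm a b s ρ := by
  have hgap := mseTerm_sub_mseTerm_div a b s ρ hb.ne' (by positivity) (by positivity)
  have : 0 < b * s * (ρ - a / b) ^ 2 / ((s + ρ) ^ 2 * (s + a / b)) := by
    have : ρ - a / b ≠ 0 := sub_ne_zero.mpr hne
    positivity
  linarith

theorem stmt_7_general (n : ℕ) (σ : ℕ → ℝ)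
    (hex : ∃ i < n, 0 < σ i)
    (σz σx : ℝ) (hσz : 0 < σz) (hσx : 0 < σx) :
    ∀ ρ : ℝ, 0 < ρ → ρ ≠ σz ^ 2 / σx ^ 2 →
      ∑ i ∈ Finset.range n,
          (σz ^ 2 * σ i ^ 2 + σx ^ 2 * (σz ^ 2 / σx ^ 2) ^ 2) /
            (σ i ^ 2 + σz ^ 2 / σx ^ 2) ^ 2
        < ∑ i ∈ Finset.range n,
            (σz ^ 2 * σ i ^ 2 + σx ^ 2 * ρ ^ 2) / (σ i ^ 2 + ρ) ^ 2 := by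
  intro ρ hρ hne
  obtain ⟨j, hjn, hσj⟩ := hex
  apply Finset.sum_lt_sum
  · intro i _
    exact mseTerm_div_le (by positivity) (by positivity) (sq_nonneg _) hρ
  · exact ⟨j, Finset.mem_range.mpr hjn,
      mseTerm_div_lt (by positivity) (by positivity) (by positivity) hρ.le hne⟩

/-- (Theorem 2, exact white-signal case) For
`MSE(ρ) = Σᵢ (σ_z²σᵢ² + σ_x²ρ²)/(σᵢ² + ρ)²`, the point `ρ⋆ = σ_z²/σ_x²` is the unique
global minimizer on `(0, ∞)`. -/
theorem stmt_7 (n : ℕ) (hn : 1 ≤ n) (σ : ℕ → ℝ)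
    (hσ : ∀ i < n, 0 ≤ σ i) (hex : ∃ i < n, 0 < σ i)
    (σz σx : ℝ) (hσz : 0 < σz) (hσx : 0 < σx) :
    ∀ ρ : ℝ, 0 < ρ → ρ ≠ σz ^ 2 / σx ^ 2 →
      ∑ i ∈ Finset.range n,
          (σz ^ 2 * σ i ^ 2 + σx ^ 2 * (σz ^ 2 / σx ^ 2) ^ 2) /
            (σ i ^ 2 + σz ^ 2 / σx ^ 2) ^ 2
        < ∑ i ∈ Finset.range n,
            (σz ^ 2 * σ i ^ 2 + σx ^ 2 * ρ ^ 2) / (σ i ^ 2 + ρ) ^ 2 :=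
  stmt_7_general n σ hex σz σx hσz hσx
end

section
/- (Property 3) Let n ≥ 1, let n₁ be an integer with 1 ≤ n₁ ≤ n, set n₂ = n − n₁ and β = n/n₁, and let σ₁, …, σₙ be positive reals and b₁, …, bₙ reals. Define G(ρ) = (Σᵢ₌₁ⁿ σᵢ²bᵢ²/(σᵢ²+ρ)²)·(Σⱼ₌₁^{n₁} (βσⱼ²+ρ)/(σⱼ²+ρ)²) + (n₂/ρ)·(Σᵢ₌₁ⁿ σᵢ²bᵢ²/(σᵢ²+ρ)²) − (Σᵢ₌₁ⁿ bᵢ²/(σᵢ²+ρ)²)·(Σⱼ₌₁^{n₁} σⱼ²(βσⱼ²+ρ)/(σⱼ²+ρ)²). If n₂ ≥ 1 and at least one bᵢ ≠ 0, then G(ρ) tends to +∞ as ρ tends to 0 from the right. -/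
/-- The COPRA characteristic function `G(ρ)`. -/
noncomputable def copraG (n n₁ : ℕ) (σ b : ℕ → ℝ) (ρ : ℝ) : ℝ :=
  (∑ i ∈ Finset.range n, σ i ^ 2 * b i ^ 2 / (σ i ^ 2 + ρ) ^ 2) *
      (∑ j ∈ Finset.range n₁,
        (((n : ℝ) / n₁) * σ j ^ 2 + ρ) / (σ j ^ 2 + ρ) ^ 2)
    + (((n - n₁ : ℕ) : ℝ) / ρ) *
        (∑ i ∈ Finset.range n, σ i ^ 2 * b i ^ 2 / (σ i ^ 2 + ρ) ^ 2)
    - (∑ i ∈ Finset.range n, b i ^ 2 / (σ i ^ 2 + ρ) ^ 2) *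
        (∑ j ∈ Finset.range n₁,
          σ j ^ 2 * (((n : ℝ) / n₁) * σ j ^ 2 + ρ) / (σ j ^ 2 + ρ) ^ 2)

/-! All four sums in `G` are continuous at `ρ = 0` because every `σᵢ > 0`, so
`G(ρ) = (bounded) + (n₂ / ρ) · A(ρ)` with `A(0) = Σ bᵢ² / σᵢ² > 0` as soon as some `bᵢ ≠ 0`;
the term `n₂ / ρ` then drives `G` to `+∞`. -/

open Filter Topology

lemma continuousAt_sum_div_sq_add {s : Finset ℕ} {σ : ℕ → ℝ} {p : ℕ → ℝ → ℝ}
    (hσ : ∀ i ∈ s, σ i ≠ 0) (hp : ∀ i ∈ s, ContinuousAt (p i) 0) :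
    ContinuousAt (fun ρ => ∑ i ∈ s, p i ρ / (σ i ^ 2 + ρ) ^ 2) 0 :=
  tendsto_finsetSum _ fun i hi => (hp i hi).div (by fun_prop) (by simpa using hσ i hi)

lemma sum_sq_mul_sq_div_sq_add_pos {s : Finset ℕ} {σ b : ℕ → ℝ} {ρ : ℝ} (hρ : 0 ≤ ρ)
    (hσ : ∀ i ∈ s, σ i ≠ 0) (hb : ∃ i ∈ s, b i ≠ 0) :
    0 < ∑ i ∈ s, σ i ^ 2 * b i ^ 2 / (σ i ^ 2 + ρ) ^ 2 := by
  obtain ⟨i, hi, hbi⟩ := hb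
  have hσi := hσ i hi
  exact Finset.sum_pos' (fun _ _ => by positivity) ⟨i, hi, by positivity⟩

lemma tendsto_add_div_mul_atTop {f a : ℝ → ℝ} {L a₀ c : ℝ} (hc : 0 < c) (ha₀ : 0 < a₀)
    (hf : Tendsto f (𝓝[>] 0) (𝓝 L)) (ha : Tendsto a (𝓝[>] 0) (𝓝 a₀)) :
    Tendsto (fun ρ => f ρ + c / ρ * a ρ) (𝓝[>] 0) atTop :=
  hf.add_atTop <| by
    simpa [div_eq_mul_inv] using
      (tendsto_inv_nhdsGT_zero.const_mul_atTop hc).atTop_mul_pos ha₀ ha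

theorem stmt_9_general (n n₁ : ℕ) (hn₁n : n₁ ≤ n)
    (σ b : ℕ → ℝ) (hσ : ∀ i < n, 0 < σ i)
    (hn₂ : 1 ≤ n - n₁) (hb : ∃ i < n, b i ≠ 0) :
    Filter.Tendsto (copraG n n₁ σ b) (nhdsWithin 0 (Set.Ioi 0)) Filter.atTop := by
  have hσn : ∀ i ∈ Finset.range n, σ i ≠ 0 := fun i hi => (hσ i (Finset.mem_range.mp hi)).ne'
  have hσn₁ : ∀ j ∈ Finset.range n₁, σ j ≠ 0 :=
    fun j hj => hσn j (Finset.range_subset_range.mpr hn₁n hj)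
  set A := fun ρ : ℝ => ∑ i ∈ Finset.range n, σ i ^ 2 * b i ^ 2 / (σ i ^ 2 + ρ) ^ 2
  set B := fun ρ : ℝ => ∑ j ∈ Finset.range n₁, ((n : ℝ) / n₁ * σ j ^ 2 + ρ) / (σ j ^ 2 + ρ) ^ 2
  set C := fun ρ : ℝ => ∑ i ∈ Finset.range n, b i ^ 2 / (σ i ^ 2 + ρ) ^ 2
  set D := fun ρ : ℝ => ∑ j ∈ Finset.range n₁,
    σ j ^ 2 * ((n : ℝ) / n₁ * σ j ^ 2 + ρ) / (σ j ^ 2 + ρ) ^ 2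
  have hA : ContinuousAt A 0 := continuousAt_sum_div_sq_add hσn fun _ _ => continuousAt_const
  have hB : ContinuousAt B 0 := continuousAt_sum_div_sq_add hσn₁ fun _ _ => by fun_prop
  have hC : ContinuousAt C 0 := continuousAt_sum_div_sq_add hσn fun _ _ => continuousAt_const
  have hD : ContinuousAt D 0 := continuousAt_sum_div_sq_add hσn₁ fun _ _ => by fun_prop
  have hA₀ : 0 < A 0 := by
    obtain ⟨i, hi, hbi⟩ := hb
    exact sum_sq_mul_sq_div_sq_add_pos le_rfl hσn ⟨i, Finset.mem_range.mpr hi, hbi⟩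
  have hG : copraG n n₁ σ b =
      fun ρ => (A ρ * B ρ - C ρ * D ρ) + ((n - n₁ : ℕ) : ℝ) / ρ * A ρ := by
    funext ρ
    simp only [copraG, A, B, C, D]
    ring
  rw [hG]
  exact tendsto_add_div_mul_atTop (by exact_mod_cast hn₂) hA₀
    ((hA.mul hB).sub (hC.mul hD)).continuousWithinAt hA.continuousWithinAt

/-- (Property 3) If `n₂ = n − n₁ ≥ 1` and some `bᵢ ≠ 0`, the COPRA characteristic function
`G(ρ)` tends to `+∞` as `ρ → 0⁺`. -/
theorem stmt_9 (n n₁ : ℕ) (hn₁ : 1 ≤ n₁) (hn₁n : n₁ ≤ n)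
    (σ b : ℕ → ℝ) (hσ : ∀ i < n, 0 < σ i)
    (hn₂ : 1 ≤ n - n₁) (hb : ∃ i < n, b i ≠ 0) :
    Filter.Tendsto (copraG n n₁ σ b) (nhdsWithin 0 (Set.Ioi 0)) Filter.atTop :=
  stmt_9_general n n₁ hn₁n σ b hσ hn₂ hb
end

section
/- (Property 6, part 1) Let n ≥ 1, let n₁ be an integer with 1 ≤ n₁ ≤ n, set n₂ = n − n₁ and β = n/n₁, and let σ₁, …, σₙ be positive reals and b₁, …, bₙ reals. Define G₁(ρ) = (Σᵢ₌₁ⁿ σᵢ²bᵢ²/(σᵢ²+ρ)²)·(Σⱼ₌₁^{n₁} (βσⱼ²+ρ)/(σⱼ²+ρ)²) + (n₂/ρ)·(Σᵢ₌₁ⁿ σᵢ²bᵢ²/(σᵢ²+ρ)²). Then G₁ is completely monotonic on (0, ∞): for every k ∈ ℕ and every ρ > 0, (−1)^k · G₁^{(k)}(ρ) ≥ 0, where G₁^{(k)} denotes the k-th derivative of G₁. -/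
open Set Filter Topology Finset

namespace CopraCM

/-- Completely monotone on `(0,∞)` with smoothness. -/
def CM (f : ℝ → ℝ) : Prop :=
  ContDiffOn ℝ (⊤ : ℕ∞) f (Set.Ioi 0) ∧
    ∀ (k : ℕ) (x : ℝ), 0 < x → 0 ≤ (-1 : ℝ) ^ k * iteratedDeriv k f x

lemma smooth_iter {f : ℝ → ℝ} (hf : ContDiffOn ℝ (⊤ : ℕ∞) f (Set.Ioi 0)) (k : ℕ) :
    ContDiffOn ℝ (⊤ : ℕ∞) (iteratedDeriv k f) (Set.Ioi 0) := by
  induction k generalizing f with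
  | zero => simpa [iteratedDeriv_zero] using hf
  | succ k ih =>
    rw [iteratedDeriv_succ']
    exact ih (hf.deriv_of_isOpen isOpen_Ioi (mod_cast le_top))

lemma hasDerivAt_iter {f : ℝ → ℝ} (hf : ContDiffOn ℝ (⊤ : ℕ∞) f (Set.Ioi 0)) (k : ℕ)
    {x : ℝ} (hx : x ∈ Set.Ioi (0:ℝ)) :
    HasDerivAt (iteratedDeriv k f) (iteratedDeriv (k+1) f x) x := by
  have hd : DifferentiableAt ℝ (iteratedDeriv k f) x :=
    ((smooth_iter hf k).contDiffAt (isOpen_Ioi.mem_nhds hx)).differentiableAt (by simp)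
  rw [iteratedDeriv_succ]
  exact hd.hasDerivAt

lemma iter_add {f g : ℝ → ℝ} (hf : ContDiffOn ℝ (⊤ : ℕ∞) f (Set.Ioi 0))
    (hg : ContDiffOn ℝ (⊤ : ℕ∞) g (Set.Ioi 0)) (k : ℕ) :
    ∀ x ∈ Set.Ioi (0:ℝ), iteratedDeriv k (fun y => f y + g y) x
      = iteratedDeriv k f x + iteratedDeriv k g x := by
  induction k with
  | zero => intro x hx; simp
  | succ k ih =>
    intro x hx
    have hev : iteratedDeriv k (fun y => f y + g y) =ᶠ[𝓝 x]
        fun y => iteratedDeriv k f y + iteratedDeriv k g y :=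
      Filter.eventually_of_mem (isOpen_Ioi.mem_nhds hx) ih
    rw [iteratedDeriv_succ, hev.deriv_eq]
    exact ((hasDerivAt_iter hf k hx).add (hasDerivAt_iter hg k hx)).deriv

lemma leibniz_aux (a b : ℕ → ℝ) (k : ℕ) :
    ∑ j ∈ Finset.range (k+1),
        (k.choose j : ℝ) * (a (j+1) * b (k-j) + a j * b (k+1-j))
      = ∑ j ∈ Finset.range (k+2), ((k+1).choose j : ℝ) * (a j * b (k+1-j)) := by
  have h1 : ∑ j ∈ Finset.range (k+2), ((k+1).choose j : ℝ) * (a j * b (k+1-j))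
      = ∑ j ∈ Finset.range (k+1), ((k+1).choose (j+1) : ℝ) * (a (j+1) * b (k-j))
        + a 0 * b (k+1) := by
    rw [Finset.sum_range_succ' _ (k+1)]
    simp [Nat.succ_sub_succ]
  have h2 : ∑ j ∈ Finset.range (k+1), (k.choose j : ℝ) * (a j * b (k+1-j))
      = ∑ j ∈ Finset.range (k+1), (k.choose (j+1) : ℝ) * (a (j+1) * b (k-j))
        + a 0 * b (k+1) := by
    rw [Finset.sum_range_succ' _ k, Finset.sum_range_succ]
    simp [Nat.succ_sub_succ, Nat.choose_succ_self]
  rw [h1]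
  simp only [mul_add, Finset.sum_add_distrib]
  rw [h2, ← add_assoc, ← Finset.sum_add_distrib]
  congr 1
  apply Finset.sum_congr rfl
  intro j hj
  have : ((k+1).choose (j+1) : ℝ) = (k.choose j : ℝ) + (k.choose (j+1) : ℝ) := by
    rw [← Nat.cast_add, Nat.choose_succ_succ]
  rw [this]; ring

lemma iter_mul {f g : ℝ → ℝ} (hf : ContDiffOn ℝ (⊤ : ℕ∞) f (Set.Ioi 0))
    (hg : ContDiffOn ℝ (⊤ : ℕ∞) g (Set.Ioi 0)) (k : ℕ) :
    ∀ x ∈ Set.Ioi (0:ℝ), iteratedDeriv k (fun y => f y * g y) x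
      = ∑ j ∈ Finset.range (k+1),
          (k.choose j : ℝ) * (iteratedDeriv j f x * iteratedDeriv (k-j) g x) := by
  induction k with
  | zero => intro x hx; simp
  | succ k ih =>
    intro x hx
    have hev : iteratedDeriv k (fun y => f y * g y) =ᶠ[𝓝 x]
        fun y => ∑ j ∈ Finset.range (k+1),
          (k.choose j : ℝ) * (iteratedDeriv j f y * iteratedDeriv (k-j) g y) :=
      Filter.eventually_of_mem (isOpen_Ioi.mem_nhds hx) ih
    rw [iteratedDeriv_succ, hev.deriv_eq]
    have hD : HasDerivAt (fun y => ∑ j ∈ Finset.range (k+1),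
          (k.choose j : ℝ) * (iteratedDeriv j f y * iteratedDeriv (k-j) g y))
        (∑ j ∈ Finset.range (k+1), (k.choose j : ℝ) *
          (iteratedDeriv (j+1) f x * iteratedDeriv (k-j) g x
            + iteratedDeriv j f x * iteratedDeriv (k-j+1) g x)) x := by
      apply HasDerivAt.fun_sum
      intro j hj
      exact ((hasDerivAt_iter hf j hx).mul (hasDerivAt_iter hg (k-j) hx)).const_mul _
    rw [hD.deriv]
    have : ∀ j ∈ Finset.range (k+1), (k.choose j : ℝ) *
          (iteratedDeriv (j+1) f x * iteratedDeriv (k-j) g x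
            + iteratedDeriv j f x * iteratedDeriv (k-j+1) g x)
        = (k.choose j : ℝ) *
          (iteratedDeriv (j+1) f x * iteratedDeriv (k-j) g x
            + iteratedDeriv j f x * iteratedDeriv (k+1-j) g x) := by
      intro j hj
      have hj' : j ≤ k := by simpa using Nat.lt_succ_iff.mp (Finset.mem_range.mp hj)
      have : k - j + 1 = k + 1 - j := by omega
      rw [this]
    rw [Finset.sum_congr rfl this]
    exact leibniz_aux (fun j => iteratedDeriv j f x) (fun j => iteratedDeriv j g x) k

lemma CM.add {f g : ℝ → ℝ} (hf : CM f) (hg : CM g) : CM (fun x => f x + g x) := by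
  refine ⟨hf.1.add hg.1, fun k x hx => ?_⟩
  rw [iter_add hf.1 hg.1 k x hx, mul_add]
  exact add_nonneg (hf.2 k x hx) (hg.2 k x hx)

lemma CM.mul {f g : ℝ → ℝ} (hf : CM f) (hg : CM g) : CM (fun x => f x * g x) := by
  refine ⟨hf.1.mul hg.1, fun k x hx => ?_⟩
  rw [iter_mul hf.1 hg.1 k x hx, Finset.mul_sum]
  apply Finset.sum_nonneg
  intro j hj
  have hj' : j ≤ k := Nat.lt_succ_iff.mp (Finset.mem_range.mp hj)
  have hsplit : ((-1:ℝ))^k = (-1:ℝ)^j * (-1:ℝ)^(k-j) := by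
    rw [← pow_add]; congr 1; omega
  have h1 := hf.2 j x hx
  have h2 := hg.2 (k-j) x hx
  calc (0:ℝ) ≤ (k.choose j : ℝ) * (((-1:ℝ)^j * iteratedDeriv j f x)
        * ((-1:ℝ)^(k-j) * iteratedDeriv (k-j) g x)) := by positivity
    _ = (-1:ℝ)^k * ((k.choose j : ℝ) *
          (iteratedDeriv j f x * iteratedDeriv (k-j) g x)) := by rw [hsplit]; ring

lemma CM.congr {f g : ℝ → ℝ} (hf : CM f) (h : ∀ x, f x = g x) : CM g := by
  have : f = g := funext h
  rwa [← this]

lemma iter_zero_fun (k : ℕ) (x : ℝ) : iteratedDeriv k (fun _ : ℝ => (0:ℝ)) x = 0 := by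
  induction k generalizing x with
  | zero => simp
  | succ k ih => rw [iteratedDeriv_succ']; simp only [deriv_const']; exact ih x

lemma iteratedDeriv_const' (k : ℕ) (c x : ℝ) :
    iteratedDeriv k (fun _ : ℝ => c) x = if k = 0 then c else 0 := by
  rcases Nat.eq_zero_or_pos k with h | h
  · subst h; simp
  · obtain ⟨m, rfl⟩ := Nat.exists_eq_succ_of_ne_zero (Nat.pos_iff_ne_zero.mp h)
    rw [iteratedDeriv_succ']
    simp only [deriv_const']
    simp [iter_zero_fun]

lemma CM.const {c : ℝ} (hc : 0 ≤ c) : CM (fun _ => c) := by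
  refine ⟨contDiffOn_const, fun k x hx => ?_⟩
  rw [iteratedDeriv_const' k c x]
  rcases Nat.eq_zero_or_pos k with h | h
  · subst h; simpa using hc
  · simp [Nat.pos_iff_ne_zero.mp h]

/-- The basic building block: `ρ ↦ (c + ρ)⁻¹` for `c ≥ 0`. -/
lemma iter_inv (c : ℝ) (k : ℕ) :
    ∀ x : ℝ, -c < x → iteratedDeriv k (fun ρ => (c + ρ)⁻¹) x
      = (-1:ℝ)^k * (Nat.factorial k : ℝ) / (c + x)^(k+1) := by
  induction k with
  | zero => intro x hx; simp
  | succ k ih =>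
    intro x hx
    have hcx : (0:ℝ) < c + x := by linarith
    have hev : iteratedDeriv k (fun ρ => (c + ρ)⁻¹) =ᶠ[𝓝 x]
        fun y => (-1:ℝ)^k * (Nat.factorial k : ℝ) / (c + y)^(k+1) := by
      refine Filter.eventually_of_mem (IsOpen.mem_nhds isOpen_Ioi (show x ∈ Set.Ioi (-c) from hx)) ?_
      intro y hy
      exact ih y hy
    rw [iteratedDeriv_succ, hev.deriv_eq]
    have hpow : HasDerivAt (fun y : ℝ => (c + y)^(k+1))
        (((k:ℝ)+1) * (c+x)^k) x := by
      have h0 : HasDerivAt (fun y : ℝ => c + y) 1 x := (hasDerivAt_id x).const_add c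
      simpa using h0.fun_pow (k+1)
    have hne : (c + x)^(k+1) ≠ 0 := pow_ne_zero _ (ne_of_gt hcx)
    have hinv := hpow.fun_inv hne
    have hfin := hinv.const_mul ((-1:ℝ)^k * (Nat.factorial k : ℝ))
    have : (fun y => (-1:ℝ)^k * (Nat.factorial k : ℝ) / (c + y)^(k+1))
        = fun y => (-1:ℝ)^k * (Nat.factorial k : ℝ) * ((c + y)^(k+1))⁻¹ := by
      funext y; rw [div_eq_mul_inv]
    rw [this, hfin.deriv]
    rw [Nat.factorial_succ]
    push_cast
    field_simp
    ring

lemma CM.inv_shift {c : ℝ} (hc : 0 ≤ c) : CM (fun ρ => (c + ρ)⁻¹) := by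
  constructor
  · apply ContDiffOn.inv
    · exact (contDiffOn_const.add contDiffOn_id)
    · intro x hx
      have : (0:ℝ) < x := hx
      positivity
  · intro k x hx
    rw [iter_inv c k x (by linarith)]
    have hcx : (0:ℝ) < c + x := by linarith
    have hone : ((-1:ℝ))^k * ((-1:ℝ))^k = 1 := by
      rw [← pow_add]
      exact Even.neg_one_pow ⟨k, rfl⟩
    rw [mul_div_assoc, ← mul_assoc, hone, one_mul]
    positivity

lemma CM.sum (F : ℕ → ℝ → ℝ) (m : ℕ) (h : ∀ i < m, CM (F i)) :
    CM (fun x => ∑ i ∈ Finset.range m, F i x) := by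
  induction m with
  | zero => exact (CM.const le_rfl).congr (by simp)
  | succ m ih =>
    have h1 : CM (fun x => ∑ i ∈ Finset.range m, F i x) :=
      ih (fun i hi => h i (Nat.lt_succ_of_lt hi))
    exact (h1.add (h m (Nat.lt_succ_self m))).congr
      (fun x => (Finset.sum_range_succ (fun i => F i x) m).symm)

end CopraCM
/-- The positive part `G₁(ρ)` of the COPRA characteristic function `G = G₁ − G₂`. -/
noncomputable def copraG₁ (n n₁ : ℕ) (σ b : ℕ → ℝ) (ρ : ℝ) : ℝ :=
  (∑ i ∈ Finset.range n, σ i ^ 2 * b i ^ 2 / (σ i ^ 2 + ρ) ^ 2) *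
      (∑ j ∈ Finset.range n₁,
        (((n : ℝ) / n₁) * σ j ^ 2 + ρ) / (σ j ^ 2 + ρ) ^ 2)
    + (((n - n₁ : ℕ) : ℝ) / ρ) *
        (∑ i ∈ Finset.range n, σ i ^ 2 * b i ^ 2 / (σ i ^ 2 + ρ) ^ 2)

/-- (Property 6, part 1) `G₁` is completely monotonic on `(0, ∞)`:
`(−1)^k G₁⁽ᵏ⁾(ρ) ≥ 0` for all `k ∈ ℕ` and all `ρ > 0`. -/
theorem stmt_11 (n n₁ : ℕ) (hn : 1 ≤ n) (hn₁ : 1 ≤ n₁) (hn₁n : n₁ ≤ n)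
    (σ b : ℕ → ℝ) (hσ : ∀ i < n, 0 < σ i) :
    ∀ (k : ℕ) (ρ : ℝ), 0 < ρ →
      0 ≤ (-1 : ℝ) ^ k * iteratedDeriv k (copraG₁ n n₁ σ b) ρ := by
  have hn₁R : (0:ℝ) < (n₁:ℝ) := by exact_mod_cast hn₁
  have hβ : (1:ℝ) ≤ (n:ℝ)/(n₁:ℝ) := by
    rw [le_div_iff₀ hn₁R, one_mul]
    exact_mod_cast hn₁n
  -- A is completely monotone
  have hA : CopraCM.CM (fun ρ => ∑ i ∈ Finset.range n,
      σ i ^ 2 * b i ^ 2 / (σ i ^ 2 + ρ) ^ 2) := by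
    apply CopraCM.CM.sum
    intro i _
    have h1 : CopraCM.CM (fun ρ =>
        (σ i ^ 2 * b i ^ 2) * ((σ i ^ 2 + ρ)⁻¹ * (σ i ^ 2 + ρ)⁻¹)) :=
      (CopraCM.CM.const (by positivity)).mul
        ((CopraCM.CM.inv_shift (sq_nonneg _)).mul (CopraCM.CM.inv_shift (sq_nonneg _)))
    apply h1.congr
    intro x
    rw [div_eq_mul_inv, pow_two (σ i ^ 2 + x), mul_inv]
  -- B is completely monotone
  have hB : CopraCM.CM (fun ρ => ∑ j ∈ Finset.range n₁,
      (((n : ℝ) / n₁) * σ j ^ 2 + ρ) / (σ j ^ 2 + ρ) ^ 2) := by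
    apply CopraCM.CM.sum
    intro j _
    have hcoef : (0:ℝ) ≤ ((n:ℝ)/(n₁:ℝ) - 1) * σ j ^ 2 :=
      mul_nonneg (by linarith) (sq_nonneg _)
    have h1 : CopraCM.CM (fun ρ =>
        ((((n:ℝ)/(n₁:ℝ) - 1) * σ j ^ 2) * ((σ j ^ 2 + ρ)⁻¹ * (σ j ^ 2 + ρ)⁻¹))
          + (σ j ^ 2 + ρ)⁻¹) :=
      ((CopraCM.CM.const hcoef).mul
        ((CopraCM.CM.inv_shift (sq_nonneg _)).mul (CopraCM.CM.inv_shift (sq_nonneg _)))).add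
        (CopraCM.CM.inv_shift (sq_nonneg _))
    apply h1.congr
    intro x
    by_cases h : σ j ^ 2 + x = 0
    · rw [h]; simp
    · field_simp
      ring
  -- C is completely monotone
  have hC : CopraCM.CM (fun ρ => ((n - n₁ : ℕ) : ℝ) / ρ) := by
    have h1 : CopraCM.CM (fun ρ => ((n - n₁ : ℕ) : ℝ) * ((0 + ρ)⁻¹)) :=
      (CopraCM.CM.const (Nat.cast_nonneg _)).mul (CopraCM.CM.inv_shift le_rfl)
    apply h1.congr
    intro x
    rw [zero_add, ← div_eq_mul_inv]
  have hG : CopraCM.CM (copraG₁ n n₁ σ b) :=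
    ((hA.mul hB).add (hC.mul hA)).congr (fun x => rfl)
  intro k ρ hρ
  exact hG.2 k ρ hρ
end

section
/- (Property 6, part 2) Let n ≥ 1, let n₁ be an integer with 1 ≤ n₁ ≤ n, set β = n/n₁, and let σ₁, …, σₙ be positive reals and b₁, …, bₙ reals. Define G₂(ρ) = (Σᵢ₌₁ⁿ bᵢ²/(σᵢ²+ρ)²)·(Σⱼ₌₁^{n₁} σⱼ²(βσⱼ²+ρ)/(σⱼ²+ρ)²). Then G₂ is completely monotonic on (0, ∞): for every k ∈ ℕ and every ρ > 0, (−1)^k · G₂^{(k)}(ρ) ≥ 0, where G₂^{(k)} denotes the k-th derivative of G₂. -/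
/-!
With `β = n / n₁ ≥ 1`, every summand of the second factor of `G₂` splits as
`σ²(βσ² + ρ)/(σ² + ρ)² = σ²/(σ² + ρ) + (β - 1)σ⁴/(σ² + ρ)²`, so `G₂` is a product of two sums of
functions `c / (s + ρ)^m` with `c, s ≥ 0`. Such a function is completely monotone, since
`(-1)^k` times its `k`-th derivative is `c m(m+1)⋯(m+k-1) / (s + ρ)^(m+k)`, and complete
monotonicity is preserved by sums and, through the Leibniz rule, by products.
-/

/-- The subtracted part `G₂(ρ)` of the COPRA characteristic function `G = G₁ − G₂`. -/
noncomputable def copraG₂ (n n₁ : ℕ) (σ b : ℕ → ℝ) (ρ : ℝ) : ℝ :=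
  (∑ i ∈ Finset.range n, b i ^ 2 / (σ i ^ 2 + ρ) ^ 2) *
    (∑ j ∈ Finset.range n₁,
      σ j ^ 2 * (((n : ℝ) / n₁) * σ j ^ 2 + ρ) / (σ j ^ 2 + ρ) ^ 2)

open Set Finset
open scoped ContDiff

/-- Smoothness on `(0, ∞)` makes `iteratedDeriv` there the genuine derivative. -/
structure CompletelyMonotoneOnIoi (f : ℝ → ℝ) : Prop where
  contDiffOn : ContDiffOn ℝ ∞ f (Ioi 0)
  nonneg : ∀ (k : ℕ) ⦃ρ : ℝ⦄, 0 < ρ → 0 ≤ (-1) ^ k * iteratedDeriv k f ρ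

namespace CompletelyMonotoneOnIoi

variable {f g : ℝ → ℝ}

theorem contDiffAt (hf : CompletelyMonotoneOnIoi f) (k : ℕ) {ρ : ℝ} (hρ : 0 < ρ) :
    ContDiffAt ℝ k f ρ :=
  (contDiffOn_infty.1 hf.contDiffOn k).contDiffAt (Ioi_mem_nhds hρ)

theorem congr (hf : CompletelyMonotoneOnIoi f) (hfg : EqOn f g (Ioi 0)) :
    CompletelyMonotoneOnIoi g where
  contDiffOn := hf.contDiffOn.congr hfg.symm
  nonneg k ρ hρ := by
    rw [← hfg.iteratedDeriv_of_isOpen isOpen_Ioi k hρ]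
    exact hf.nonneg k hρ

theorem add (hf : CompletelyMonotoneOnIoi f) (hg : CompletelyMonotoneOnIoi g) :
    CompletelyMonotoneOnIoi (fun ρ => f ρ + g ρ) where
  contDiffOn := hf.contDiffOn.add hg.contDiffOn
  nonneg k ρ hρ := by
    rw [iteratedDeriv_fun_add (hf.contDiffAt k hρ) (hg.contDiffAt k hρ), mul_add]
    exact add_nonneg (hf.nonneg k hρ) (hg.nonneg k hρ)

theorem sum {ι : Type*} {t : Finset ι} {f : ι → ℝ → ℝ}
    (hf : ∀ i ∈ t, CompletelyMonotoneOnIoi (f i)) :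
    CompletelyMonotoneOnIoi (fun ρ => ∑ i ∈ t, f i ρ) where
  contDiffOn := ContDiffOn.sum fun i hi => (hf i hi).contDiffOn
  nonneg k ρ hρ := by
    rw [iteratedDeriv_fun_sum fun i hi => (hf i hi).contDiffAt k hρ, Finset.mul_sum]
    exact sum_nonneg fun i hi => (hf i hi).nonneg k hρ

theorem mul (hf : CompletelyMonotoneOnIoi f) (hg : CompletelyMonotoneOnIoi g) :
    CompletelyMonotoneOnIoi (fun ρ => f ρ * g ρ) where
  contDiffOn := hf.contDiffOn.mul hg.contDiffOn
  nonneg k ρ hρ := by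
    rw [iteratedDeriv_fun_mul (hf.contDiffAt k hρ) (hg.contDiffAt k hρ), Finset.mul_sum]
    refine sum_nonneg fun i hi => ?_
    have hsign : (-1 : ℝ) ^ k = (-1) ^ i * (-1) ^ (k - i) := by
      rw [← pow_add, Nat.add_sub_cancel' (Nat.lt_succ_iff.1 (mem_range.1 hi))]
    calc (0 : ℝ) ≤ k.choose i * (((-1) ^ i * iteratedDeriv i f ρ)
          * ((-1) ^ (k - i) * iteratedDeriv (k - i) g ρ)) :=
          mul_nonneg (Nat.cast_nonneg _) (mul_nonneg (hf.nonneg i hρ) (hg.nonneg (k - i) hρ))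
      _ = _ := by rw [hsign]; ring

end CompletelyMonotoneOnIoi

theorem iteratedDeriv_div_add_pow {𝕜 : Type*} [NontriviallyNormedField 𝕜] (c s : 𝕜) (m k : ℕ)
    (x : 𝕜) :
    iteratedDeriv k (fun x => c / (s + x) ^ m) x
      = c * (∏ i ∈ range k, (-(m : 𝕜) - i)) * (s + x) ^ (-(m : ℤ) - k) := by
  have h : (fun x => c / (s + x) ^ m) = fun x => c * (s + x) ^ (-(m : ℤ)) := by
    funext x; simp [div_eq_mul_inv, zpow_neg]
  rw [h, iteratedDeriv_const_mul_field,
    congrFun (iteratedDeriv_comp_const_add k (fun y => y ^ (-(m : ℤ))) s), iteratedDeriv_eq_iterate,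
    iter_deriv_zpow]
  push_cast
  ring

theorem completelyMonotoneOnIoi_div_add_pow {c s : ℝ} (hc : 0 ≤ c) (hs : 0 ≤ s) (m : ℕ) :
    CompletelyMonotoneOnIoi (fun ρ => c / (s + ρ) ^ m) where
  contDiffOn := contDiffOn_const.div ((contDiffOn_const.add contDiffOn_id).pow m)
    fun ρ hρ => pow_ne_zero m (add_pos_of_nonneg_of_pos hs hρ).ne'
  nonneg k ρ hρ := by
    have hbase : 0 < s + ρ := add_pos_of_nonneg_of_pos hs hρ
    have hsign : (-1 : ℝ) ^ k * ∏ i ∈ range k, (-(m : ℝ) - i) = ∏ i ∈ range k, ((m : ℝ) + i) := by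
      rw [← card_range k, ← prod_const, card_range, ← prod_mul_distrib]
      exact prod_congr rfl fun i _ => by ring
    calc 0 ≤ c * (∏ i ∈ range k, ((m : ℝ) + i)) * (s + ρ) ^ (-(m : ℤ) - k) := by positivity
      _ = _ := by rw [iteratedDeriv_div_add_pow, ← hsign]; ring

theorem stmt_12_general (n n₁ : ℕ) (hn₁n : n₁ ≤ n)
    (σ b : ℕ → ℝ) :
    ∀ (k : ℕ) (ρ : ℝ), 0 < ρ →
      0 ≤ (-1 : ℝ) ^ k * iteratedDeriv k (copraG₂ n n₁ σ b) ρ := by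
  have hF : CompletelyMonotoneOnIoi fun ρ => ∑ i ∈ range n, b i ^ 2 / (σ i ^ 2 + ρ) ^ 2 :=
    .sum fun i _ => completelyMonotoneOnIoi_div_add_pow (sq_nonneg _) (sq_nonneg _) 2
  have hG : CompletelyMonotoneOnIoi fun ρ => ∑ j ∈ range n₁,
      σ j ^ 2 * (((n : ℝ) / n₁) * σ j ^ 2 + ρ) / (σ j ^ 2 + ρ) ^ 2 := by
    refine .sum fun j hj => ?_
    have hβ : 0 ≤ (n : ℝ) / n₁ - 1 := by
      rw [sub_nonneg, one_le_div₀ (by exact_mod_cast (mem_range.1 hj).pos)]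
      exact_mod_cast hn₁n
    have hs : 0 ≤ σ j ^ 2 := sq_nonneg _
    refine ((completelyMonotoneOnIoi_div_add_pow hs hs 1).add
      (completelyMonotoneOnIoi_div_add_pow (mul_nonneg hβ (pow_nonneg hs 2)) hs 2)).congr ?_
    intro ρ (hρ : 0 < ρ)
    have : σ j ^ 2 + ρ ≠ 0 := by positivity
    field_simp
    ring
  exact (hF.mul hG).nonneg

/-- (Property 6, part 2) `G₂` is completely monotonic on `(0, ∞)`:
`(−1)^k G₂⁽ᵏ⁾(ρ) ≥ 0` for all `k ∈ ℕ` and all `ρ > 0`. -/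
theorem stmt_12 (n n₁ : ℕ) (hn : 1 ≤ n) (hn₁ : 1 ≤ n₁) (hn₁n : n₁ ≤ n)
    (σ b : ℕ → ℝ) (hσ : ∀ i < n, 0 < σ i) :
    ∀ (k : ℕ) (ρ : ℝ), 0 < ρ →
      0 ≤ (-1 : ℝ) ^ k * iteratedDeriv k (copraG₂ n n₁ σ b) ρ :=
  stmt_12_general n n₁ hn₁n σ b
end

section
/- (Theorem 3) Let n ≥ 1, let n₁ be an integer with 1 ≤ n₁ ≤ n, set n₂ = n − n₁ and β = n/n₁, and let σ₁, …, σₙ be positive reals and b₁, …, bₙ reals. Define G(ρ) = (Σᵢ₌₁ⁿ σᵢ²bᵢ²/(σᵢ²+ρ)²)·(Σⱼ₌₁^{n₁} (βσⱼ²+ρ)/(σⱼ²+ρ)²) + (n₂/ρ)·(Σᵢ₌₁ⁿ σᵢ²bᵢ²/(σᵢ²+ρ)²) − (Σᵢ₌₁ⁿ bᵢ²/(σᵢ²+ρ)²)·(Σⱼ₌₁^{n₁} σⱼ²(βσⱼ²+ρ)/(σⱼ²+ρ)²). Then ρ³·G(ρ) converges, as ρ → +∞, to n·(Σⱼ₌₁ⁿ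 σⱼ²bⱼ²) − (Σᵢ₌₁^{n₁} σᵢ²)·(Σⱼ₌₁ⁿ bⱼ²). -/
/-! Each sum in `G` with a constant numerator over `(σ²+ρ)²` is `~ ρ⁻²·(Σ numerators)`, and each
one with a numerator linear in `ρ` is `~ ρ⁻¹·(Σ coefficients of ρ)`. Every product in `ρ³·G`
pairs one of each kind (the middle one pairs `n₂/ρ` with a `ρ⁻²` sum), so `ρ³·G` is a polynomial
in rescaled sums with finite limits; the `n₁` from the `β`-sum and `n₂` add up to `n`. -/

open Filter Topology

lemma tendsto_add_div_self_atTop (c : ℝ) : Tendsto (fun ρ : ℝ => (c + ρ) / ρ) atTop (𝓝 1) := by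
  have h : Tendsto (fun ρ : ℝ => c * ρ⁻¹ + 1) atTop (𝓝 1) := by
    simpa using (tendsto_inv_atTop_zero.const_mul c).add_const 1
  refine h.congr' ?_
  filter_upwards [eventually_ne_atTop 0] with ρ hρ
  field_simp

lemma tendsto_sq_mul_div_add_sq_atTop (a c : ℝ) :
    Tendsto (fun ρ : ℝ => ρ ^ 2 * (a / (c + ρ) ^ 2)) atTop (𝓝 a) := by
  have h := (((tendsto_add_div_self_atTop c).inv₀ one_ne_zero).pow 2).const_mul a
  rw [inv_one, one_pow, mul_one] at h
  refine h.congr fun ρ => ?_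
  rw [inv_div, div_pow]
  ring

lemma tendsto_mul_mul_add_div_add_sq_atTop (a c d : ℝ) :
    Tendsto (fun ρ : ℝ => ρ * (a * (d + ρ) / (c + ρ) ^ 2)) atTop (𝓝 a) := by
  have h := ((tendsto_add_div_self_atTop d).mul (tendsto_sq_mul_div_add_sq_atTop 1 c)).const_mul a
  rw [one_mul, mul_one] at h
  refine h.congr' ?_
  filter_upwards [eventually_ne_atTop 0] with ρ hρ
  field_simp

section Sums

variable {ι : Type*} (s : Finset ι)

lemma tendsto_sq_mul_sum_div_add_sq_atTop (a c : ι → ℝ) :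
    Tendsto (fun ρ : ℝ => ρ ^ 2 * ∑ i ∈ s, a i / (c i + ρ) ^ 2) atTop (𝓝 (∑ i ∈ s, a i)) := by
  simp only [Finset.mul_sum]
  exact tendsto_finsetSum s fun i _ => tendsto_sq_mul_div_add_sq_atTop (a i) (c i)

lemma tendsto_mul_sum_mul_add_div_add_sq_atTop (a c d : ι → ℝ) :
    Tendsto (fun ρ : ℝ => ρ * ∑ i ∈ s, a i * (d i + ρ) / (c i + ρ) ^ 2) atTop
      (𝓝 (∑ i ∈ s, a i)) := by
  simp only [Finset.mul_sum]
  exact tendsto_finsetSum s fun i _ => tendsto_mul_mul_add_div_add_sq_atTop (a i) (c i) (d i)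

end Sums

lemma pow_three_mul_copraG (n n₁ : ℕ) (σ b : ℕ → ℝ) {ρ : ℝ} (hρ : ρ ≠ 0) :
    ρ ^ 3 * copraG n n₁ σ b ρ =
      (ρ ^ 2 * ∑ i ∈ Finset.range n, σ i ^ 2 * b i ^ 2 / (σ i ^ 2 + ρ) ^ 2) *
          (ρ * ∑ j ∈ Finset.range n₁, ((n / n₁ : ℝ) * σ j ^ 2 + ρ) / (σ j ^ 2 + ρ) ^ 2)
        + ((n - n₁ : ℕ) : ℝ) *
          (ρ ^ 2 * ∑ i ∈ Finset.range n, σ i ^ 2 * b i ^ 2 / (σ i ^ 2 + ρ) ^ 2)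
        - (ρ ^ 2 * ∑ i ∈ Finset.range n, b i ^ 2 / (σ i ^ 2 + ρ) ^ 2) *
          (ρ * ∑ j ∈ Finset.range n₁, σ j ^ 2 * ((n / n₁ : ℝ) * σ j ^ 2 + ρ) / (σ j ^ 2 + ρ) ^ 2) := by
  simp only [copraG]
  field_simp

theorem stmt_13_general (n n₁ : ℕ) (hn₁n : n₁ ≤ n)
    (σ b : ℕ → ℝ) :
    Filter.Tendsto (fun ρ : ℝ => ρ ^ 3 * copraG n n₁ σ b ρ) Filter.atTop
      (nhds ((n : ℝ) * (∑ j ∈ Finset.range n, σ j ^ 2 * b j ^ 2)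
        - (∑ i ∈ Finset.range n₁, σ i ^ 2) * (∑ j ∈ Finset.range n, b j ^ 2))) := by
  have hσb := tendsto_sq_mul_sum_div_add_sq_atTop (Finset.range n) (fun i => σ i ^ 2 * b i ^ 2)
    (fun i => σ i ^ 2)
  have hb := tendsto_sq_mul_sum_div_add_sq_atTop (Finset.range n) (fun i => b i ^ 2)
    (fun i => σ i ^ 2)
  have hβ := tendsto_mul_sum_mul_add_div_add_sq_atTop (Finset.range n₁) (fun _ => 1)
    (fun j => σ j ^ 2) (fun j => (n / n₁ : ℝ) * σ j ^ 2)
  simp only [one_mul] at hβ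
  have hσβ := tendsto_mul_sum_mul_add_div_add_sq_atTop (Finset.range n₁) (fun j => σ j ^ 2)
    (fun j => σ j ^ 2) (fun j => (n / n₁ : ℝ) * σ j ^ 2)
  have hlim := ((hσb.mul hβ).add (hσb.const_mul ((n - n₁ : ℕ) : ℝ))).sub (hb.mul hσβ)
  have hvalue : (∑ i ∈ Finset.range n, σ i ^ 2 * b i ^ 2) * ∑ _j ∈ Finset.range n₁, (1 : ℝ)
      + ((n - n₁ : ℕ) : ℝ) * (∑ i ∈ Finset.range n, σ i ^ 2 * b i ^ 2)
      - (∑ i ∈ Finset.range n, b i ^ 2) * (∑ j ∈ Finset.range n₁, σ j ^ 2)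
      = (n : ℝ) * (∑ j ∈ Finset.range n, σ j ^ 2 * b j ^ 2)
        - (∑ i ∈ Finset.range n₁, σ i ^ 2) * (∑ j ∈ Finset.range n, b j ^ 2) := by
    simp only [Finset.sum_const, Finset.card_range, nsmul_eq_mul, mul_one, Nat.cast_sub hn₁n]
    ring
  rw [hvalue] at hlim
  refine hlim.congr' ?_
  filter_upwards [eventually_ne_atTop 0] with ρ hρ
  exact (pow_three_mul_copraG n n₁ σ b hρ).symm

/-- (Theorem 3) `ρ³·G(ρ)` converges, as `ρ → +∞`, to
`n·Σⱼ σⱼ²bⱼ² − (Σᵢ₌₁^{n₁} σᵢ²)·(Σⱼ bⱼ²)`. -/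
theorem stmt_13 (n n₁ : ℕ) (hn : 1 ≤ n) (hn₁ : 1 ≤ n₁) (hn₁n : n₁ ≤ n)
    (σ b : ℕ → ℝ) (hσ : ∀ i < n, 0 < σ i) :
    Filter.Tendsto (fun ρ : ℝ => ρ ^ 3 * copraG n n₁ σ b ρ) Filter.atTop
      (nhds ((n : ℝ) * (∑ j ∈ Finset.range n, σ j ^ 2 * b j ^ 2)
        - (∑ i ∈ Finset.range n₁, σ i ^ 2) * (∑ j ∈ Finset.range n, b j ^ 2))) :=
  stmt_13_general n n₁ hn₁n σ b
end
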